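/- arXiv:1709.06163 — 8 statements merged into one kernel-verified Lean document; each statement's English description precedes it below -/
import Mathlib

section
/- Let 3 ≤ t ≤ r+1 and let G be a finite simple graph with m edges and maximum degree at most r. Then C(t,2)·k_t(G) ≤ m·C(r−1,t−2); equivalently, k_t(G) ≤ m·C(r+1,t)/C(r+1,2). -/
/-! Double count the pairs (K, e) of a `t`-clique `K` and an edge `e` inside it. Each `K` contains
`C(t, 2)` edges. An edge `uv` lies in at most `C(r - 1, t - 2)` cliques, because `K ↦ K \ {u, v}`
embeds them into the `(t - 2)`-subsets of the common neighbourhood of `u` and `v`, a subset of the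
neighbourhood of `u` missing `v`, hence of size at most `r - 1`. -/

open scoped Classical

open Finset

namespace SimpleGraph

variable {V : Type*} [Fintype V] [DecidableEq V] {G : SimpleGraph V} [DecidableRel G.Adj]

theorem IsClique.card_edgeFinset_inter_sym2 {K : Finset V} (hK : G.IsClique (K : Set V)) :
    #(G.edgeFinset ∩ K.sym2) = (#K).choose 2 := by
  have h := congrArg card (G.map_edgeFinset_induce (s := (K : Set V)))
  simp only [card_map, toFinset_coe] at h
  rw [← h]
  convert card_edgeFinset_top_eq_card_choose_two (V := (K : Set V)) using 3
  · exact induce_eq_top.2 hK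
  · simp

theorem IsNClique.sdiff_pair_mem_powersetCard {n : ℕ} {K : Finset V} (hK : G.IsNClique n K)
    {u v : V} (huv : G.Adj u v) (hu : u ∈ K) (hv : v ∈ K) :
    K \ {u, v} ∈ (G.commonNeighbors u v).toFinset.powersetCard (n - 2) := by
  rw [mem_powersetCard]
  refine ⟨fun x hx => ?_, ?_⟩
  · simp only [mem_sdiff, mem_insert, mem_singleton, not_or] at hx
    rw [Set.mem_toFinset, mem_commonNeighbors]
    exact ⟨hK.isClique hu hx.1 (Ne.symm hx.2.1), hK.isClique hv hx.1 (Ne.symm hx.2.2)⟩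
  · rw [card_sdiff_of_subset (insert_subset hu (singleton_subset_iff.2 hv)), hK.card_eq,
      card_pair huv.ne]

theorem card_cliqueFinset_filter_mem_sym2_le {e : Sym2 V} (he : e ∈ G.edgeSet) (n : ℕ) :
    #{K ∈ G.cliqueFinset n | e ∈ K.sym2} ≤ (G.maxDegree - 1).choose (n - 2) := by
  induction e using Sym2.ind with
  | _ u v =>
  have huv : G.Adj u v := he
  have hcommon : #(G.commonNeighbors u v).toFinset ≤ G.maxDegree - 1 := by
    rw [Set.toFinset_card]
    exact Nat.le_sub_one_of_lt
      (huv.card_commonNeighbors_lt_degree.trans_le (G.degree_le_maxDegree u))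
  calc #{K ∈ G.cliqueFinset n | s(u, v) ∈ K.sym2}
      ≤ #((G.commonNeighbors u v).toFinset.powersetCard (n - 2)) := by
        refine card_le_card_of_injOn (· \ {u, v}) (fun K hK => ?_) (fun K hK L hL h => ?_)
        · simp only [coe_filter, mem_cliqueFinset_iff, mk_mem_sym2_iff] at hK
          exact hK.1.sdiff_pair_mem_powersetCard huv hK.2.1 hK.2.2
        · simp only [coe_filter, mk_mem_sym2_iff] at hK hL
          rw [← sdiff_union_of_subset (insert_subset hK.2.1 (singleton_subset_iff.2 hK.2.2)),
            show K \ {u, v} = L \ {u, v} from h,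
            sdiff_union_of_subset (insert_subset hL.2.1 (singleton_subset_iff.2 hL.2.2))]
    _ = (#(G.commonNeighbors u v).toFinset).choose (n - 2) := card_powersetCard _ _
    _ ≤ (G.maxDegree - 1).choose (n - 2) := Nat.choose_le_choose _ hcommon

end SimpleGraph

open SimpleGraph in
theorem kt_le_of_maxDegree_le_general {V : Type} [Fintype V] [DecidableEq V]
    (G : SimpleGraph V) (t r m : ℕ)
    (hm : G.edgeFinset.card = m) (hΔ : G.maxDegree ≤ r) :
    t.choose 2 * (G.cliqueFinset t).card ≤ m * (r - 1).choose (t - 2) := by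
  have hdouble := card_mul_le_card_mul (fun (K : Finset V) e => e ∈ K.sym2)
    (s := G.cliqueFinset t) (t := G.edgeFinset) (m := t.choose 2) (n := (r - 1).choose (t - 2))
    (fun K hK => by
      rw [mem_cliqueFinset_iff] at hK
      rw [bipartiteAbove, filter_mem_eq_inter, hK.isClique.card_edgeFinset_inter_sym2, hK.card_eq])
    (fun e he => (card_cliqueFinset_filter_mem_sym2_le (mem_edgeFinset.1 he) t).trans
      (Nat.choose_le_choose _ (Nat.sub_le_sub_right hΔ 1)))
  rwa [mul_comm, hm] at hdouble

/-- If `3 ≤ t ≤ r+1` and `G` has `m` edges and maximum degree at most `r`, then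
`C(t,2)·k_t(G) ≤ m·C(r−1,t−2)` (equivalently `k_t(G) ≤ m·C(r+1,t)/C(r+1,2)`). -/
theorem kt_le_of_maxDegree_le {V : Type} [Fintype V] [DecidableEq V]
    (G : SimpleGraph V) (t r m : ℕ)
    (ht : 3 ≤ t) (htr : t ≤ r + 1)
    (hm : G.edgeFinset.card = m) (hΔ : G.maxDegree ≤ r) :
    t.choose 2 * (G.cliqueFinset t).card ≤ m * (r - 1).choose (t - 2) :=
  kt_le_of_maxDegree_le_general G t r m hm hΔ
end

section
/- Let t ≥ 3, r ≥ 1, and m ≥ 1. Assume that for every m' ≤ m−1, every finite simple graph H with m' edges and maximum degree at most r satisfies k_t(H) ≤ g_t(m', r). If G is a finite simple graph with m edges and maximum degree at most r that is not connected (disregarding isolated vertices, i.e., its edge set splits into two nonempty parts with no vertex in common), then k_t(G) ≤ g_t(m, r). -/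
/-!
The edge set splits into vertex-disjoint parts `A` and `B`, so every clique with at least two
vertices lies within one part, and `k_t(G) ≤ k_t(A) + k_t(B) ≤ g_t(|A|, r) + g_t(|B|, r)` by the
hypothesis on smaller graphs. It remains to see that `m ↦ g_t(m, r)` is superadditive.

Write `f(b) = k_t(𝒞(b))`. In the colex order the `i`-th edge of the block `C(c,2) ≤ e < C(c+1,2)`
creates `C(i, t-2)` new cliques, and by the convexity of binomial coefficients every window of `ℓ`
consecutive edges creates at least as many cliques as the first `ℓ` edges; this gives
`f(x) + f(y) ≤ f(x + y)`. Below `C(r+1,2)` every window creates at most as many cliques as the last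
`ℓ` edges, which handles the carry `b₁ + b₂ ≥ C(r+1,2)` in `m = a·C(r+1,2) + b`.
-/

open scoped Classical

/-- `gVal t r m = k_t(aK_{r+1} ∪ 𝒞(b)) = a·C(r+1,t) + C(c,t) + C(d,t−1)`, where
`m = a·C(r+1,2) + b` with `0 ≤ b < C(r+1,2)`, and `b = C(c,2) + d` with `0 ≤ d < c`. -/
def gVal (t r m : ℕ) : ℕ :=
  let b := m % (r + 1).choose 2
  let c := Nat.findGreatest (fun c => c.choose 2 ≤ b) (b + 1)
  (m / (r + 1).choose 2) * (r + 1).choose t + c.choose t + (b - c.choose 2).choose (t - 1)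

-- `k_t(𝒞(b))`, where `b = C(c,2) + d` with `0 ≤ d < c`.
def colexCliqueCount (t b : ℕ) : ℕ :=
  let c := Nat.findGreatest (fun c => c.choose 2 ≤ b) (b + 1)
  c.choose t + (b - c.choose 2).choose (t - 1)

lemma gVal_eq (t r m : ℕ) :
    gVal t r m = m / (r + 1).choose 2 * (r + 1).choose t
      + colexCliqueCount t (m % (r + 1).choose 2) := by
  simp only [gVal, colexCliqueCount, Nat.add_assoc]

namespace Nat

lemma choose_two_succ (c : ℕ) : (c + 1).choose 2 = c.choose 2 + c := by
  rw [choose_succ_succ', choose_one_right, Nat.add_comm]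

lemma le_choose_two_add_one (c : ℕ) : c ≤ c.choose 2 + 1 := by
  induction c with
  | zero => simp
  | succ n ih => rw [choose_two_succ]; omega

lemma findGreatest_choose_two_add {c e : ℕ} (he : e < c) :
    findGreatest (fun x => x.choose 2 ≤ c.choose 2 + e) (c.choose 2 + e + 1) = c := by
  rw [findGreatest_eq_iff]
  refine ⟨by have := le_choose_two_add_one c; omega, fun _ => le_add_right _ _, fun n hn _ h => ?_⟩
  have := choose_le_choose 2 hn
  rw [choose_two_succ] at this
  omega

lemma exists_eq_choose_two_add (b : ℕ) : ∃ c e, e < c ∧ b = c.choose 2 + e := by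
  set c := findGreatest (fun x => x.choose 2 ≤ b) (b + 1)
  have hcb : c.choose 2 ≤ b := findGreatest_spec (P := fun x => x.choose 2 ≤ b) (m := 0)
    (zero_le _) (zero_le _)
  have hmax : ¬ (c + 1).choose 2 ≤ b := fun h => by
    have := le_findGreatest (P := fun x => x.choose 2 ≤ b) (n := b + 1)
      (by have := le_choose_two_add_one (c + 1); omega) h
    omega
  rw [choose_two_succ] at hmax
  exact ⟨c, b - c.choose 2, by omega, by omega⟩

-- discrete convexity of `n ↦ n.choose j`
lemma choose_add_add_choose_le (j s : ℕ) {m p : ℕ} (h : m ≤ p) :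
    (m + s).choose j + p.choose j ≤ m.choose j + (p + s).choose j := by
  cases j with
  | zero => simp
  | succ j =>
    induction s with
    | zero => simp
    | succ s ih =>
      have := choose_le_choose j (show m + s ≤ p + s by omega)
      rw [← Nat.add_assoc, ← Nat.add_assoc, choose_succ_succ' (m + s), choose_succ_succ' (p + s)]
      omega

lemma le_of_choose_two_le_choose_two_add {a c e : ℕ} (he : e < c)
    (h : a.choose 2 ≤ c.choose 2 + e) : a ≤ c := by
  by_contra! hca
  have := choose_le_choose 2 (show c + 1 ≤ a by omega)
  rw [choose_two_succ] at this
  omega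

end Nat

section ColexCliqueCount

open Nat

variable (k : ℕ)

lemma colexCliqueCount_choose_two_add_of_lt {t c e : ℕ} (he : e < c) :
    colexCliqueCount t (c.choose 2 + e) = c.choose t + e.choose (t - 1) := by
  simp only [colexCliqueCount, findGreatest_choose_two_add he, Nat.add_sub_cancel_left]

lemma colexCliqueCount_choose_two_add {c e : ℕ} (he : e ≤ c) :
    colexCliqueCount (k + 2) (c.choose 2 + e) = c.choose (k + 2) + e.choose (k + 1) := by
  rcases he.lt_or_eq with he | he
  · exact colexCliqueCount_choose_two_add_of_lt he
  · subst he
    have := colexCliqueCount_choose_two_add_of_lt (t := k + 2) (Nat.succ_pos e)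
    have h0 : (0 : ℕ).choose (k + 2 - 1) = 0 := choose_zero_succ k
    rw [choose_two_succ, h0, choose_succ_succ' e (k + 1)] at this
    simp only [Nat.add_zero] at this
    exact this.trans (Nat.add_comm _ _)

lemma colexCliqueCount_choose_two (c : ℕ) :
    colexCliqueCount (k + 2) (c.choose 2) = c.choose (k + 2) := by
  simpa using colexCliqueCount_choose_two_add k (zero_le c)

-- `C(e, t-1)` cliques are created by the first `e` edges of a block of the colex order.
lemma choose_add_colexCliqueCount_le {a e z : ℕ} (hea : e ≤ a) (hz : a.choose 2 ≤ z) :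
    e.choose (k + 1) + colexCliqueCount (k + 2) z ≤ colexCliqueCount (k + 2) (z + e) := by
  obtain ⟨c, d, hdc, rfl⟩ := exists_eq_choose_two_add z
  have hac := le_of_choose_two_le_choose_two_add hdc hz
  rw [colexCliqueCount_choose_two_add k hdc.le, Nat.add_assoc]
  rcases le_or_gt (d + e) c with hin | hout
  · rw [colexCliqueCount_choose_two_add k hin]
    have := choose_add_add_choose_le (k + 1) e (zero_le d)
    simp only [Nat.zero_add, choose_zero_succ] at this
    omega
  · have hsplit : c.choose 2 + (d + e) = (c + 1).choose 2 + (d + e - c) := by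
      rw [choose_two_succ]; omega
    have hpascal : (c + 1).choose (k + 2) = c.choose (k + 1) + c.choose (k + 2) :=
      choose_succ_succ' c (k + 1)
    rw [hsplit, colexCliqueCount_choose_two_add k (by omega), hpascal]
    have := choose_add_add_choose_le (k + 1) (c - e) (show d + e - c ≤ e by omega)
    rw [show d + e - c + (c - e) = d by omega, show e + (c - e) = c by omega] at this
    omega

lemma choose_add_colexCliqueCount_le_add_choose_two (a y : ℕ) :
    a.choose (k + 2) + colexCliqueCount (k + 2) y ≤ colexCliqueCount (k + 2) (y + a.choose 2) := by
  induction a with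
  | zero => simp
  | succ a ih =>
    have := choose_add_colexCliqueCount_le k le_rfl (Nat.le_add_left (a.choose 2) y)
    have hpascal : (a + 1).choose (k + 2) = a.choose (k + 1) + a.choose (k + 2) :=
      choose_succ_succ' a (k + 1)
    rw [choose_two_succ, ← Nat.add_assoc, hpascal]
    omega

lemma colexCliqueCount_add_colexCliqueCount_le (x y : ℕ) :
    colexCliqueCount (k + 2) x + colexCliqueCount (k + 2) y ≤ colexCliqueCount (k + 2) (x + y) := by
  obtain ⟨a, e, hea, rfl⟩ := exists_eq_choose_two_add x
  have := choose_add_colexCliqueCount_le_add_choose_two k a y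
  have := choose_add_colexCliqueCount_le k hea.le (Nat.le_add_left (a.choose 2) y)
  rw [colexCliqueCount_choose_two_add k hea.le,
    show a.choose 2 + e + y = y + a.choose 2 + e by omega]
  omega

lemma colexCliqueCount_window_le_of_block {c ℓ z : ℕ} (hz : c.choose 2 ≤ z)
    (hzℓ : z + ℓ ≤ c.choose 2 + c) :
    colexCliqueCount (k + 2) (z + ℓ) + (c - ℓ).choose (k + 1)
      ≤ colexCliqueCount (k + 2) z + c.choose (k + 1) := by
  obtain ⟨d, rfl⟩ := Nat.exists_eq_add_of_le hz
  rw [Nat.add_assoc, colexCliqueCount_choose_two_add k (by omega),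
    colexCliqueCount_choose_two_add k (by omega)]
  have := choose_add_add_choose_le (k + 1) ℓ (show d ≤ c - ℓ by omega)
  rw [Nat.sub_add_cancel (by omega)] at this
  omega

lemma colexCliqueCount_succ_le {r z : ℕ} (hz : z < (r + 1).choose 2) :
    colexCliqueCount (k + 2) (z + 1) ≤ colexCliqueCount (k + 2) z + r.choose k := by
  obtain ⟨c, d, hdc, rfl⟩ := exists_eq_choose_two_add z
  have hcr : c ≤ r := by
    by_contra! h
    have := choose_le_choose 2 (show r + 1 ≤ c by omega)
    omega
  have hpascal : (d + 1).choose (k + 1) = d.choose k + d.choose (k + 1) := choose_succ_succ' d k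
  have := choose_le_choose k (show d ≤ r by omega)
  rw [Nat.add_assoc, colexCliqueCount_choose_two_add k hdc,
    colexCliqueCount_choose_two_add k hdc.le, hpascal]
  omega

-- `C(r, t-1) - C(r-ℓ, t-1)` cliques are created by the last `ℓ` edges below `C(r+1,2)`.
lemma colexCliqueCount_window_le (r : ℕ) : ∀ ℓ z, ℓ ≤ r → z + ℓ ≤ (r + 1).choose 2 →
    colexCliqueCount (k + 2) (z + ℓ) + (r - ℓ).choose (k + 1)
      ≤ colexCliqueCount (k + 2) z + r.choose (k + 1) := by
  induction r with
  | zero =>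
    intro ℓ z hℓ _
    simp [Nat.le_zero.mp hℓ]
  | succ r ih =>
    intro ℓ z hℓ hzℓ
    have hq := choose_two_succ (r + 1)
    have hpascal : (r + 1).choose (k + 1) = r.choose k + r.choose (k + 1) :=
      choose_succ_succ' r k
    rcases le_or_gt ((r + 1).choose 2) z with htop | hz
    · exact colexCliqueCount_window_le_of_block k htop (by omega)
    rcases le_or_gt (z + ℓ) ((r + 1).choose 2) with hlow | hcross
    · rcases hℓ.lt_or_eq with hℓ | rfl
      · have := ih ℓ z (by omega) hlow
        have hpascal' : (r - ℓ + 1).choose (k + 1) = (r - ℓ).choose k + (r - ℓ).choose (k + 1) :=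
          choose_succ_succ' (r - ℓ) k
        have := choose_le_choose k (show r - ℓ ≤ r by omega)
        rw [show r + 1 - ℓ = r - ℓ + 1 by omega]
        omega
      · have hrest := ih r (z + 1) le_rfl (by omega)
        have := colexCliqueCount_succ_le k hz
        rw [Nat.sub_self, show z + 1 + r = z + (r + 1) by omega] at hrest
        rw [Nat.sub_self]
        omega
    · obtain ⟨γ, v, hγ, rfl⟩ : ∃ γ v, z + γ = (r + 1).choose 2 ∧ ℓ = γ + v :=
        ⟨(r + 1).choose 2 - z, z + ℓ - (r + 1).choose 2, by omega, by omega⟩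
      have := ih γ z (by omega) (by omega)
      rw [hγ, colexCliqueCount_choose_two] at this
      rw [← Nat.add_assoc, hγ, colexCliqueCount_choose_two_add k (by omega)]
      have hconv := choose_add_add_choose_le (k + 1) v (zero_le (r + 1 - (γ + v)))
      have hpascal' : (r - γ + 1).choose (k + 1) = (r - γ).choose k + (r - γ).choose (k + 1) :=
        choose_succ_succ' (r - γ) k
      have := choose_le_choose k (show r - γ ≤ r by omega)
      rw [Nat.zero_add, choose_zero_succ, show r + 1 - (γ + v) + v = r - γ + 1 by omega] at hconv
      omega

lemma colexCliqueCount_add_le_of_add_le_choose_two (r : ℕ) : ∀ u z, z + u ≤ (r + 1).choose 2 →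
    colexCliqueCount (k + 2) (z + u) + colexCliqueCount (k + 2) ((r + 1).choose 2 - u)
      ≤ colexCliqueCount (k + 2) z + (r + 1).choose (k + 2) := by
  induction r with
  | zero =>
    intro u z h
    have h0 := colexCliqueCount_choose_two k 0
    simp only [zero_add, choose_succ_self, choose_zero_succ, nonpos_iff_eq_zero,
      Nat.add_eq_zero_iff] at h h0 ⊢
    simp [h0, h.1, h.2]
  | succ r ih =>
    intro u z h
    have hq := choose_two_succ (r + 1)
    have hpascal : (r + 1 + 1).choose (k + 2) = (r + 1).choose (k + 1) + (r + 1).choose (k + 2) :=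
      choose_succ_succ' (r + 1) (k + 1)
    rcases le_or_gt u (r + 1) with hu | hu
    · have := colexCliqueCount_window_le k (r + 1) u z hu h
      rw [hq, Nat.add_sub_assoc hu, colexCliqueCount_choose_two_add k (Nat.sub_le _ _)]
      omega
    · have := ih (u - (r + 1)) z (by omega)
      have := colexCliqueCount_window_le k (r + 1) (r + 1) (z + (u - (r + 1))) le_rfl (by omega)
      rw [Nat.sub_self, Nat.add_assoc, Nat.sub_add_cancel hu.le] at this
      rw [hq, show (r + 1).choose 2 + (r + 1) - u = (r + 1).choose 2 - (u - (r + 1)) by omega]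
      simp only [choose_zero_succ] at this
      omega

lemma colexCliqueCount_add_colexCliqueCount_le_choose_add {r x y : ℕ}
    (hx : x ≤ (r + 1).choose 2) (hy : y ≤ (r + 1).choose 2) (hxy : (r + 1).choose 2 ≤ x + y) :
    colexCliqueCount (k + 2) x + colexCliqueCount (k + 2) y
      ≤ (r + 1).choose (k + 2) + colexCliqueCount (k + 2) (x + y - (r + 1).choose 2) := by
  have := colexCliqueCount_add_le_of_add_le_choose_two k r ((r + 1).choose 2 - y)
    (x + y - (r + 1).choose 2) (by omega)
  rw [show x + y - (r + 1).choose 2 + ((r + 1).choose 2 - y) = x by omega,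
    Nat.sub_sub_self hy] at this
  omega

end ColexCliqueCount

lemma gVal_mul_add (t r a : ℕ) {b : ℕ} (hb : b < (r + 1).choose 2) :
    gVal t r ((r + 1).choose 2 * a + b) = a * (r + 1).choose t + colexCliqueCount t b := by
  rw [gVal_eq, Nat.mul_add_div (by omega), Nat.mul_add_mod, Nat.div_eq_of_lt hb,
    Nat.mod_eq_of_lt hb, Nat.add_zero]

theorem gVal_add_gVal_le {t : ℕ} (ht : 2 ≤ t) (r m₁ m₂ : ℕ) :
    gVal t r m₁ + gVal t r m₂ ≤ gVal t r (m₁ + m₂) := by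
  obtain ⟨k, rfl⟩ := Nat.exists_eq_add_of_le' ht
  rcases Nat.eq_zero_or_pos ((r + 1).choose 2) with hq | hq
  · simpa only [gVal_eq, hq, Nat.div_zero, Nat.mod_zero, zero_mul, zero_add]
      using colexCliqueCount_add_colexCliqueCount_le k m₁ m₂
  set q := (r + 1).choose 2 with hq_def
  obtain ⟨a₁, b₁, hb₁, rfl⟩ : ∃ a b, b < q ∧ m₁ = q * a + b :=
    ⟨m₁ / q, m₁ % q, Nat.mod_lt _ hq, (Nat.div_add_mod _ _).symm⟩
  obtain ⟨a₂, b₂, hb₂, rfl⟩ : ∃ a b, b < q ∧ m₂ = q * a + b :=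
    ⟨m₂ / q, m₂ % q, Nat.mod_lt _ hq, (Nat.div_add_mod _ _).symm⟩
  rw [gVal_mul_add _ _ _ hb₁, gVal_mul_add _ _ _ hb₂]
  rcases lt_or_ge (b₁ + b₂) q with hlt | hge
  · rw [show q * a₁ + b₁ + (q * a₂ + b₂) = q * (a₁ + a₂) + (b₁ + b₂) by ring,
      gVal_mul_add _ _ _ hlt, Nat.add_mul]
    have := colexCliqueCount_add_colexCliqueCount_le k b₁ b₂
    omega
  · rw [show q * a₁ + b₁ + (q * a₂ + b₂) = q * (a₁ + a₂ + 1) + (b₁ + b₂ - q) by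
      rw [Nat.mul_add, Nat.mul_add]; omega, gVal_mul_add _ _ _ (by omega), Nat.add_mul, Nat.add_mul]
    have := colexCliqueCount_add_colexCliqueCount_le_choose_add k hb₁.le hb₂.le hge
    rw [← hq_def] at this
    omega

open Finset

namespace SimpleGraph

variable {V W : Type*} {G : SimpleGraph V}

-- If `xy ∈ A` and `uv ∈ B` lie in a clique, then `x ≠ u` and the edge `xu` meets both.
lemma IsClique.isClique_fromEdgeSet_or {A B : Set (Sym2 V)} (hG : G.edgeSet ⊆ A ∪ B)
    (hAB : ∀ e ∈ A, ∀ f ∈ B, ∀ v : V, v ∈ e → v ∉ f) {s : Set V} (hs : G.IsClique s) :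
    (fromEdgeSet A).IsClique s ∨ (fromEdgeSet B).IsClique s := by
  have hedge : ∀ ⦃x⦄, x ∈ s → ∀ ⦃y⦄, y ∈ s → x ≠ y → s(x, y) ∈ A ∨ s(x, y) ∈ B :=
    fun x hx y hy hxy => hG (hs hx hy hxy)
  rw [or_iff_not_imp_left]
  intro hA x hx y hy hxy
  refine (fromEdgeSet_adj _).mpr ⟨?_, hxy⟩
  obtain ⟨u, hu, v, hv, huv, huvA⟩ : ∃ u ∈ s, ∃ v ∈ s, u ≠ v ∧ s(u, v) ∉ A := by
    by_contra! h
    exact hA fun u hu v hv huv => (fromEdgeSet_adj _).mpr ⟨h u hu v hv huv, huv⟩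
  have huvB : s(u, v) ∈ B := (hedge hu hv huv).resolve_left huvA
  by_contra hxyB
  have hxyA : s(x, y) ∈ A := (hedge hx hy hxy).resolve_right hxyB
  have hxu : x ≠ u := by
    rintro rfl
    exact hAB _ hxyA _ huvB x (Sym2.mem_mk_left x y) (Sym2.mem_mk_left x v)
  rcases hedge hx hu hxu with hxuA | hxuB
  · exact hAB _ hxuA _ huvB u (Sym2.mem_mk_right x u) (Sym2.mem_mk_left u v)
  · exact hAB _ hxyA _ hxuB x (Sym2.mem_mk_left x y) (Sym2.mem_mk_left x u)

lemma edgeFinset_fromEdgeSet_of_subset {A : Finset (Sym2 V)} (hA : ↑A ⊆ G.edgeSet)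
    [Fintype (fromEdgeSet (A : Set (Sym2 V))).edgeSet] :
    (fromEdgeSet (A : Set (Sym2 V))).edgeFinset = A := by
  ext e
  rw [mem_edgeFinset, edgeSet_fromEdgeSet, Set.mem_sdiff, mem_coe]
  exact ⟨And.left, fun he => ⟨he, G.not_isDiag_of_mem_edgeSet (hA he)⟩⟩

variable [Fintype V] [DecidableEq V]

lemma card_cliqueFinset_eq_ncard [DecidableRel G.Adj] (n : ℕ) :
    #(G.cliqueFinset n) = (G.cliqueSet n).ncard := by
  rw [← coe_cliqueFinset, Set.ncard_coe_finset]

lemma card_cliqueFinset_map_equiv [Fintype W] [DecidableEq W] [DecidableRel G.Adj] (e : V ≃ W)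
    [DecidableRel (G.map e).Adj] (n : ℕ) :
    #((G.map e).cliqueFinset n) = #(G.cliqueFinset n) := by
  rw [card_cliqueFinset_eq_ncard, card_cliqueFinset_eq_ncard, cliqueSet_map_of_equiv,
    Set.ncard_image_of_injective _ (Finset.map_injective _)]

lemma card_cliqueFinset_le_add [DecidableRel G.Adj] {A B : Set (Sym2 V)}
    [DecidableRel (fromEdgeSet A).Adj] [DecidableRel (fromEdgeSet B).Adj]
    (hG : G.edgeSet ⊆ A ∪ B) (hAB : ∀ e ∈ A, ∀ f ∈ B, ∀ v : V, v ∈ e → v ∉ f) (n : ℕ) :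
    #(G.cliqueFinset n)
      ≤ #((fromEdgeSet A).cliqueFinset n) + #((fromEdgeSet B).cliqueFinset n) := by
  refine (card_le_card fun s hs => ?_).trans (card_union_le _ _)
  rw [mem_cliqueFinset_iff, isNClique_iff] at hs
  rw [mem_union, mem_cliqueFinset_iff, mem_cliqueFinset_iff, isNClique_iff, isNClique_iff]
  rcases hs.1.isClique_fromEdgeSet_or hG hAB with h | h
  · exact Or.inl ⟨h, hs.2⟩
  · exact Or.inr ⟨h, hs.2⟩

end SimpleGraph

open SimpleGraph

lemma card_cliqueFinset_le_gVal {V : Type} [Fintype V] [DecidableEq V] {t r m : ℕ}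
    (ih : ∀ (n : ℕ) (H : SimpleGraph (Fin n)),
      H.edgeFinset.card < m → H.maxDegree ≤ r →
      (H.cliqueFinset t).card ≤ gVal t r H.edgeFinset.card)
    (G : SimpleGraph V) [DecidableRel G.Adj] (hm : #G.edgeFinset < m) (hΔ : G.maxDegree ≤ r) :
    #(G.cliqueFinset t) ≤ gVal t r #G.edgeFinset := by
  let e := Fintype.equivFin V
  let hiso := Iso.map e G
  have hedges := hiso.card_edgeFinset_eq
  have := ih _ (G.map e) (by convert hm using 1; convert hedges.symm)
    (by convert hΔ using 1; convert hiso.maxDegree_eq.symm)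
  convert this using 2
  · convert (card_cliqueFinset_map_equiv e t).symm
  · convert hedges

theorem disconnected_case_general {V : Type} [Fintype V] [DecidableEq V]
    (t r m : ℕ) (ht : 3 ≤ t)
    (ih : ∀ (n : ℕ) (H : SimpleGraph (Fin n)),
      H.edgeFinset.card < m → H.maxDegree ≤ r →
      (H.cliqueFinset t).card ≤ gVal t r H.edgeFinset.card)
    (G : SimpleGraph V)
    (hGm : G.edgeFinset.card = m) (hΔ : G.maxDegree ≤ r)
    (hdisc : ∃ A B : Finset (Sym2 V), G.edgeFinset = A ∪ B ∧ A.Nonempty ∧ B.Nonempty ∧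
      ∀ e ∈ A, ∀ f ∈ B, ∀ v : V, v ∈ e → v ∉ f) :
    (G.cliqueFinset t).card ≤ gVal t r m := by
  obtain ⟨A, B, hGAB, hA, hB, hAB⟩ := hdisc
  have hdisj : Disjoint A B := disjoint_left.mpr fun e heA heB => by
    induction e using Sym2.ind with
    | _ x y => exact hAB _ heA _ heB x (Sym2.mem_mk_left x y) (Sym2.mem_mk_left x y)
  have hcard : #A + #B = m := by rw [← hGm, hGAB, card_union_of_disjoint hdisj]
  have hG : G.edgeSet = ↑A ∪ ↑B := by rw [← coe_edgeFinset, hGAB, coe_union]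
  have hpart : ∀ C : Finset (Sym2 V), ↑C ⊆ G.edgeSet → #C < m →
      #((fromEdgeSet (C : Set (Sym2 V))).cliqueFinset t) ≤ gVal t r #C := fun C hC hCm => by
    have hedges := edgeFinset_fromEdgeSet_of_subset hC
    have hle : fromEdgeSet (C : Set (Sym2 V)) ≤ G :=
      (fromEdgeSet_le _).mpr (Set.sdiff_subset.trans hC)
    convert card_cliqueFinset_le_gVal ih _ (by convert hCm; convert hedges)
      ((maxDegree_mono hle).trans hΔ)
    convert hedges.symm
  calc #(G.cliqueFinset t)
      ≤ #((fromEdgeSet (A : Set (Sym2 V))).cliqueFinset t)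
        + #((fromEdgeSet (B : Set (Sym2 V))).cliqueFinset t) :=
        card_cliqueFinset_le_add hG.le hAB t
    _ ≤ gVal t r #A + gVal t r #B :=
        add_le_add (hpart A (hG ▸ Set.subset_union_left) (by have := hB.card_pos; omega))
          (hpart B (hG ▸ Set.subset_union_right) (by have := hA.card_pos; omega))
    _ ≤ gVal t r m := hcard ▸ gVal_add_gVal_le (by omega) r #A #B

/-- If the conjecture `k_t(H) ≤ g_t(e(H), r)` holds for all graphs of maximum degree at most `r`
with fewer than `m` edges, and `G` is a graph with `m` edges and maximum degree at most `r`
which is not connected (its edge set splits into two nonempty parts sharing no vertex), then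
`k_t(G) ≤ g_t(m, r)`. -/
theorem disconnected_case {V : Type} [Fintype V] [DecidableEq V]
    (t r m : ℕ) (ht : 3 ≤ t) (hr : 1 ≤ r) (hm : 1 ≤ m)
    (ih : ∀ (n : ℕ) (H : SimpleGraph (Fin n)),
      H.edgeFinset.card < m → H.maxDegree ≤ r →
      (H.cliqueFinset t).card ≤ gVal t r H.edgeFinset.card)
    (G : SimpleGraph V)
    (hGm : G.edgeFinset.card = m) (hΔ : G.maxDegree ≤ r)
    (hdisc : ∃ A B : Finset (Sym2 V), G.edgeFinset = A ∪ B ∧ A.Nonempty ∧ B.Nonempty ∧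
      ∀ e ∈ A, ∀ f ∈ B, ∀ v : V, v ∈ e → v ∉ f) :
    (G.cliqueFinset t).card ≤ gVal t r m :=
  disconnected_case_general t r m ht ih G hGm hΔ hdisc
end

section
/- Let G be a finite simple graph with maximum degree at most r, let T be a cluster of G, and let xy be a blue edge of G with respect to T, where x ∈ S_T. Then the weight of xy satisfies w(xy) = |N(x) ∩ N(y)| ≤ s − 2, where s = |S_T|; that is, the edge xy lies in at most s − 2 triangles of G. -/
/-
Every vertex `z ∈ T` already has the `r` neighbours `(T \ {z}) ∪ S_T`, so degree at most `r`
forces `N(z) = (T \ {z}) ∪ S_T`; in particular no vertex of `T` is adjacent to `y ∉ T ∪ S_T`.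
Hence the common neighbours of `x` and `y` lie in `N(x)` but avoid the `|T| + 1` vertices of
`T ∪ {y} ⊆ N(x)`, giving `w(xy) ≤ r - |T| - 1 = s - 2`.
-/
open scoped Classical
open Finset

variable {V : Type} [Fintype V] [DecidableEq V]

/-- A tight clique for the parameter `r`: a complete subgraph `T` all of whose edges `xy` are
tight, i.e. have weight `w(xy) = |N(x) ∩ N(y)| = r − 1`. -/
def IsTightClique (G : SimpleGraph V) (r : ℕ) (T : Finset V) : Prop :=
  G.IsClique ↑T ∧ ∀ x ∈ T, ∀ y ∈ T, x ≠ y →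
    (G.neighborFinset x ∩ G.neighborFinset y).card = r - 1

/-- A cluster: a maximal tight clique. -/
def IsCluster (G : SimpleGraph V) (r : ℕ) (T : Finset V) : Prop :=
  IsTightClique G r T ∧ ∀ T' : Finset V, IsTightClique G r T' → T ⊆ T' → T' = T

/-- `S_T = ⋂_{v ∈ T} N(v)`, the set of common neighbors of the vertices of `T`. -/
noncomputable def commonNbrs (G : SimpleGraph V) (T : Finset V) : Finset V :=
  Finset.univ.filter fun u => ∀ v ∈ T, G.Adj v u

/-- The red graph `R_T`: the complement of the induced subgraph `G[S]` (for `S = S_T`), viewed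
as the graph on `V` whose edges are the non-adjacent pairs of distinct vertices of `S`. -/
def redGraph (G : SimpleGraph V) (S : Finset V) : SimpleGraph V where
  Adj u v := u ∈ S ∧ v ∈ S ∧ u ≠ v ∧ ¬G.Adj u v
  symm := by
    constructor
    intro u v h
    exact ⟨h.2.1, h.1, h.2.2.1.symm, fun h' => h.2.2.2 h'.symm⟩
  loopless := by
    constructor
    intro u h
    exact h.2.2.1 rfl

/-- A blue edge: an edge of `G` with one endpoint in `S_T` and the other outside `T ∪ S_T`. -/
def IsBlueEdge (G : SimpleGraph V) (T : Finset V) (u v : V) : Prop :=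
  G.Adj u v ∧ ((u ∈ commonNbrs G T ∧ v ∉ T ∪ commonNbrs G T) ∨
    (v ∈ commonNbrs G T ∧ u ∉ T ∪ commonNbrs G T))

/-- The graph `B_T` of blue edges. -/
def blueGraph (G : SimpleGraph V) (T : Finset V) : SimpleGraph V where
  Adj u v := IsBlueEdge G T u v
  symm := by
    constructor
    intro u v h
    exact ⟨h.1.symm, h.2.symm⟩
  loopless := ⟨fun u h => G.irrefl h.1⟩

/-- The folding `G_T` of `G` at the cluster `T`: add all missing pairs inside `S_T` (so that
`T ∪ S_T` induces a complete graph) and delete all blue edges. -/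
def folding (G : SimpleGraph V) (T : Finset V) : SimpleGraph V where
  Adj u v := u ≠ v ∧ (G.Adj u v ∨ (u ∈ commonNbrs G T ∧ v ∈ commonNbrs G T)) ∧
    ¬IsBlueEdge G T u v
  symm := by
    constructor
    intro u v h
    obtain ⟨h1, h2, h3⟩ := h
    refine ⟨h1.symm, ?_, ?_⟩
    · rcases h2 with h | h
      · exact Or.inl h.symm
      · exact Or.inr ⟨h.2, h.1⟩
    · intro hb
      exact h3 ⟨hb.1.symm, hb.2.symm⟩
  loopless := ⟨fun u h => h.1 rfl⟩

theorem Finset.card_inter_add_card_le_of_subset_of_disjoint {α : Type*} [DecidableEq α]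
    {s t u : Finset α} (hus : u ⊆ s) (hut : Disjoint u t) : #(s ∩ t) + #u ≤ #s := by
  rw [← card_union_of_disjoint (disjoint_of_subset_left inter_subset_right hut.symm)]
  exact card_le_card (union_subset inter_subset_left hus)

namespace SimpleGraph

theorem card_neighborFinset_le_of_maxDegree_le {α : Type*} [Fintype α] {H : SimpleGraph α}
    [DecidableRel H.Adj] {r : ℕ} (hΔ : H.maxDegree ≤ r) (v : α) :
    #(H.neighborFinset v) ≤ r :=
  H.card_neighborFinset_eq_degree v ▸ (H.degree_le_maxDegree v).trans hΔ

variable {G : SimpleGraph V} {T : Finset V}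

theorem mem_commonNbrs {u : V} : u ∈ commonNbrs G T ↔ ∀ v ∈ T, G.Adj v u := by
  simp [commonNbrs]

theorem disjoint_commonNbrs : Disjoint T (commonNbrs G T) :=
  Finset.disjoint_left.2 fun _ hu hS => G.irrefl (mem_commonNbrs.1 hS _ hu)

theorem neighborFinset_eq_erase_union_commonNbrs {r : ℕ} (hΔ : G.maxDegree ≤ r)
    (hT : G.IsClique (T : Set V)) (hTS : #T + #(commonNbrs G T) = r + 1) {z : V} (hz : z ∈ T) :
    G.neighborFinset z = T.erase z ∪ commonNbrs G T := by
  have hsub : T.erase z ∪ commonNbrs G T ⊆ G.neighborFinset z := by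
    intro w hw
    rw [mem_neighborFinset]
    rcases mem_union.1 hw with hwT | hwS
    · exact hT hz (mem_of_mem_erase hwT) (ne_of_mem_erase hwT).symm
    · exact mem_commonNbrs.1 hwS z hz
  have hcard : #(T.erase z ∪ commonNbrs G T) = r := by
    rw [card_union_of_disjoint (disjoint_commonNbrs.mono_left (erase_subset z T)),
      card_erase_of_mem hz]
    have := card_pos.2 ⟨z, hz⟩
    omega
  exact (eq_of_subset_of_card_le hsub
    (hcard ▸ card_neighborFinset_le_of_maxDegree_le hΔ z)).symm

theorem not_adj_of_notMem_union_commonNbrs {r : ℕ} (hΔ : G.maxDegree ≤ r)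
    (hT : G.IsClique (T : Set V)) (hTS : #T + #(commonNbrs G T) = r + 1) {z y : V}
    (hz : z ∈ T) (hy : y ∉ T ∪ commonNbrs G T) : ¬G.Adj z y := by
  rw [← mem_neighborFinset, neighborFinset_eq_erase_union_commonNbrs hΔ hT hTS hz]
  exact fun h => hy (union_subset_union (erase_subset z T) subset_rfl h)

end SimpleGraph

open SimpleGraph in
/-- Each blue edge has weight at most `s − 2`: if `T` is a cluster of a graph `G` with maximum
degree at most `r`, `x ∈ S_T`, `y ∉ T ∪ S_T` and `xy` is an edge (i.e. a blue edge), then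
`w(xy) = |N(x) ∩ N(y)| ≤ |S_T| − 2`, i.e. `xy` lies in at most `s − 2` triangles of `G`. -/
theorem blue_edge_weight_le {V : Type} [Fintype V] [DecidableEq V]
    (G : SimpleGraph V) (r : ℕ) (hΔ : G.maxDegree ≤ r)
    (T : Finset V) (hT : IsCluster G r T)
    (hTS : T.card + (commonNbrs G T).card = r + 1)
    (x y : V) (hx : x ∈ commonNbrs G T) (hy : y ∉ T ∪ commonNbrs G T)
    (hadj : G.Adj x y) :
    ((G.neighborFinset x ∩ G.neighborFinset y).card : ℤ)
      ≤ ((commonNbrs G T).card : ℤ) - 2 := by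
  have hyT : y ∉ T := fun h => hy (mem_union_left _ h)
  have hsub : insert y T ⊆ G.neighborFinset x := insert_subset
    ((mem_neighborFinset _ _ _).2 hadj) fun v hv =>
      (mem_neighborFinset _ _ _).2 (mem_commonNbrs.1 hx v hv).symm
  have hdisj : Disjoint (insert y T) (G.neighborFinset y) := by
    refine disjoint_insert_left.2 ⟨fun h => G.irrefl ((mem_neighborFinset _ _ _).1 h), ?_⟩
    exact Finset.disjoint_left.2 fun z hz hzy =>
      not_adj_of_notMem_union_commonNbrs hΔ hT.1.1 hTS hz hy
        ((mem_neighborFinset _ _ _).1 hzy).symm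
  have hcount := card_inter_add_card_le_of_subset_of_disjoint hsub hdisj
  rw [card_insert_of_notMem hyT] at hcount
  have hdeg := card_neighborFinset_le_of_maxDegree_le hΔ x
  omega
end

section
/- Let H be a finite simple graph and let B be a bipartite graph with bipartition (V(H), Y). Let x, y ∈ Y be non-adjacent vertices of B with N_B(x) ⊄ N_B(y) and N_B(y) ⊄ N_B(x). Then ψ_H(B) ≤ ψ_H(B_{x→y}) and d_2(B) < d_2(B_{x→y}). -/
open scoped Classical
open Finset

/-- The compression `G_{x→y}` of a graph `G` from `x` to `y` (intended for non-adjacent `x, y`):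
delete all edges between `x` and `N(x) ∖ N(y)` and add all edges from `y` to `N(x) ∖ N(y)`. -/
def compress {W : Type} (G : SimpleGraph W) (x y : W) : SimpleGraph W where
  Adj u v := u ≠ v ∧
    ((G.Adj u v ∧ ¬(u = x ∧ G.Adj x v ∧ ¬G.Adj y v) ∧ ¬(v = x ∧ G.Adj x u ∧ ¬G.Adj y u)) ∨
      (u = y ∧ G.Adj x v ∧ ¬G.Adj y v) ∨ (v = y ∧ G.Adj x u ∧ ¬G.Adj y u))
  symm := by
    constructor
    intro u v h
    obtain ⟨hne, h⟩ := h
    refine ⟨hne.symm, ?_⟩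
    rcases h with ⟨h1, h2, h3⟩ | h | h
    · exact Or.inl ⟨h1.symm, h3, h2⟩
    · exact Or.inr (Or.inr h)
    · exact Or.inr (Or.inl h)
  loopless := ⟨fun u h => h.1 rfl⟩

/-- `d₂(G) = Σ_v d(v)²`. -/
noncomputable def degSq {W : Type} [Fintype W] (G : SimpleGraph W) : ℕ :=
  ∑ v, (G.degree v) ^ 2

/-- For a graph `H` and a bipartite graph `B` with bipartition `(V(H), Y)`,
`ψ_H(B) = Σ_{v ∈ V(H)} C(d_B(v), 2) + Σ_{y ∈ Y} #{pairs {i,j} ⊆ V(H) : i ≠ j,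
iy, jy ∈ E(B), ij ∉ E(H)}`. -/
noncomputable def psi {V Y : Type} [Fintype V] [Fintype Y] [DecidableEq V]
    (H : SimpleGraph V) (B : SimpleGraph (V ⊕ Y)) : ℕ :=
  (∑ v : V, (B.degree (Sum.inl v)).choose 2) +
    ∑ y : Y, ((Finset.powersetCard 2 (Finset.univ : Finset V)).filter
      (fun p => (∀ i ∈ p, B.Adj (Sum.inr y) (Sum.inl i)) ∧
        ∀ i ∈ p, ∀ j ∈ p, i ≠ j → ¬H.Adj i j)).card

/-!
Compression only moves edges at `x` and `y`: with `A = N(x)`, `C = N(y)` it gives `N'(x) = A ∩ C`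
and `N'(y) = A ∪ C`, and any other vertex `u` trades its edge to `x` for one to `y` exactly when
`u ∈ A ∖ C`, so its degree is unchanged. Hence `d₂` grows by
`|A ∩ C|² + |A ∪ C|² - |A|² - |C|² = 2 (|A ∪ C| - |A|) (|A ∪ C| - |C|) > 0`.
In `ψ_H` the first sum is unchanged, while the non-edges of `H` counted at `x` and `y` are those
inside `A` and inside `C`; by inclusion–exclusion there are at most as many of these as there are
non-edges inside `A ∩ C` plus non-edges inside `A ∪ C`.
-/

theorem sum_add_eq_sum_add_of_eq_off_pair {α M : Type*} [Fintype α] [AddCommMonoid M]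
    {f g : α → M} {a b : α} (hab : a ≠ b) (h : ∀ c, c ≠ a → c ≠ b → f c = g c) :
    ∑ c, f c + (g a + g b) = ∑ c, g c + (f a + f b) := by
  have hrest : ∑ c ∈ {a, b}ᶜ, f c = ∑ c ∈ {a, b}ᶜ, g c :=
    sum_congr rfl fun c hc => by
      simp only [mem_compl, mem_insert, mem_singleton, not_or] at hc
      exact h c hc.1 hc.2
  rw [← sum_add_sum_compl {a, b} f, ← sum_add_sum_compl {a, b} g, sum_pair hab, sum_pair hab,
    hrest]
  abel

theorem sq_add_sq_lt_sq_add_sq {a b m n : ℕ} (hsum : m + n = a + b) (ha : a < n) (hb : b < n) :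
    a ^ 2 + b ^ 2 < m ^ 2 + n ^ 2 := by
  nlinarith [Nat.mul_lt_mul_of_lt_of_le ha hb.le (by omega)]

theorem card_filter_add_card_filter_le {α : Type*} {s : Finset α} {p q p' q' : α → Prop}
    [DecidablePred p] [DecidablePred q] [DecidablePred p'] [DecidablePred q']
    (hp' : ∀ a ∈ s, p' a ↔ p a ∧ q a) (hq' : ∀ a ∈ s, p a ∨ q a → q' a) :
    #(s.filter p) + #(s.filter q) ≤ #(s.filter p') + #(s.filter q') :=
  calc #(s.filter p) + #(s.filter q)
      = #(s.filter fun a => p a ∨ q a) + #(s.filter fun a => p a ∧ q a) := by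
        rw [filter_or, filter_and, card_union_add_card_inter]
    _ ≤ #(s.filter q') + #(s.filter p') :=
        add_le_add (card_le_card (monotone_filter_right s hq'))
          (congrArg card (filter_congr hp')).ge
    _ = #(s.filter p') + #(s.filter q') := add_comm _ _

section Compress

variable {W : Type} (G : SimpleGraph W) {x y : W}

theorem compress_adj {u v : W} :
    (compress G x y).Adj u v ↔ u ≠ v ∧
      ((G.Adj u v ∧ ¬(u = x ∧ G.Adj x v ∧ ¬G.Adj y v) ∧ ¬(v = x ∧ G.Adj x u ∧ ¬G.Adj y u)) ∨
        (u = y ∧ G.Adj x v ∧ ¬G.Adj y v) ∨ (v = y ∧ G.Adj x u ∧ ¬G.Adj y u)) :=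
  Iff.rfl

theorem compress_adj_left (hxy : x ≠ y) (w : W) :
    (compress G x y).Adj x w ↔ G.Adj x w ∧ G.Adj y w := by
  rw [compress_adj]
  constructor
  · rintro ⟨-, ⟨hxw, hkeep, -⟩ | ⟨rfl, -⟩ | ⟨rfl, hxx, -⟩⟩
    · exact ⟨hxw, by_contra fun hyw => hkeep ⟨rfl, hxw, hyw⟩⟩
    · exact absurd rfl hxy
    · exact absurd hxx (G.loopless.irrefl x)
  · rintro ⟨hxw, hyw⟩
    exact ⟨hxw.ne, .inl ⟨hxw, fun h => h.2.2 hyw, fun h => G.loopless.irrefl x (h.1 ▸ h.2.1)⟩⟩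

theorem compress_adj_right (hadj : ¬G.Adj x y) (w : W) :
    (compress G x y).Adj y w ↔ G.Adj x w ∨ G.Adj y w := by
  rw [compress_adj]
  constructor
  · rintro ⟨-, ⟨hyw, -⟩ | ⟨-, hxw, -⟩ | ⟨-, hxy, -⟩⟩
    · exact .inr hyw
    · exact .inl hxw
    · exact absurd hxy hadj
  · intro h
    by_cases hyw : G.Adj y w
    · exact ⟨hyw.ne, .inl ⟨hyw, fun h => h.2.2 (h.1 ▸ hyw), fun h => hadj (h.1 ▸ hyw.symm)⟩⟩
    · have hxw := h.resolve_right hyw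
      exact ⟨fun hw => hadj (hw ▸ hxw), .inr (.inl ⟨rfl, hxw, hyw⟩)⟩

theorem compress_adj_of_ne {u w : W} (hux : u ≠ x) (huy : u ≠ y) (hwx : w ≠ x) (hwy : w ≠ y) :
    (compress G x y).Adj u w ↔ G.Adj u w := by
  rw [compress_adj]
  constructor
  · rintro ⟨-, ⟨huw, -⟩ | ⟨rfl, -⟩ | ⟨rfl, -⟩⟩
    · exact huw
    · exact absurd rfl huy
    · exact absurd rfl hwy
  · intro huw
    exact ⟨huw.ne, .inl ⟨huw, fun h => hux h.1, fun h => hwx h.1⟩⟩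

variable [Fintype W]

theorem degree_compress_left (hxy : x ≠ y) :
    (compress G x y).degree x = #(G.neighborFinset x ∩ G.neighborFinset y) := by
  rw [← SimpleGraph.card_neighborFinset_eq_degree]
  congr 1
  ext w
  simp [compress_adj_left G hxy]

theorem degree_compress_right (hadj : ¬G.Adj x y) :
    (compress G x y).degree y = #(G.neighborFinset x ∪ G.neighborFinset y) := by
  rw [← SimpleGraph.card_neighborFinset_eq_degree]
  congr 1
  ext w
  simp [compress_adj_right G hadj]

theorem degree_compress_of_ne (hxy : x ≠ y) (hadj : ¬G.Adj x y) {u : W} (hux : u ≠ x)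
    (huy : u ≠ y) : (compress G x y).degree u = G.degree u := by
  have hdeg : ∀ K : SimpleGraph W, K.degree u = ∑ w, if K.Adj u w then 1 else 0 := fun K => by
    rw [← K.card_neighborFinset_eq_degree, K.neighborFinset_eq_filter, card_filter]
  have hsum := sum_add_eq_sum_add_of_eq_off_pair
    (f := fun w => if (compress G x y).Adj u w then 1 else 0)
    (g := fun w => if G.Adj u w then 1 else 0) hxy
    fun w hwx hwy => by simp only [compress_adj_of_ne G hux huy hwx hwy]
  have hx : (compress G x y).Adj u x ↔ G.Adj u x ∧ G.Adj u y := by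
    rw [SimpleGraph.adj_comm, compress_adj_left G hxy, G.adj_comm x, G.adj_comm y]
  have hy : (compress G x y).Adj u y ↔ G.Adj u x ∨ G.Adj u y := by
    rw [SimpleGraph.adj_comm, compress_adj_right G hadj, G.adj_comm x, G.adj_comm y]
  rw [hdeg, hdeg]
  by_cases hux' : G.Adj u x <;> by_cases huy' : G.Adj u y <;>
    simp only [hx, hy, hux', huy', and_self, and_true, and_false, or_self, or_true, true_or,
      if_true, if_false] at hsum <;> omega

theorem degSq_lt_degSq_compress (hadj : ¬G.Adj x y)
    (hxy : ¬G.neighborSet x ⊆ G.neighborSet y) (hyx : ¬G.neighborSet y ⊆ G.neighborSet x) :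
    degSq G < degSq (compress G x y) := by
  have hne : x ≠ y := by
    rintro rfl
    exact hxy subset_rfl
  simp only [← SimpleGraph.coe_neighborFinset, coe_subset] at hxy hyx
  have hsq := sq_add_sq_lt_sq_add_sq (card_inter_add_card_union _ _)
    (card_lt_card (left_lt_sup.2 hyx)) (card_lt_card (right_lt_sup.2 hxy))
  have hsum := sum_add_eq_sum_add_of_eq_off_pair
    (f := fun v => G.degree v ^ 2) (g := fun v => (compress G x y).degree v ^ 2) hne
    fun v hvx hvy => by rw [degree_compress_of_ne G hne hadj hvx hvy]
  rw [degree_compress_left G hne, degree_compress_right G hadj] at hsum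
  unfold degSq
  simp only [SimpleGraph.card_neighborFinset_eq_degree] at hsq
  omega

end Compress

theorem psi_le_psi_compress {V Y : Type} [Fintype V] [Fintype Y] [DecidableEq V]
    (H : SimpleGraph V) (B : SimpleGraph (V ⊕ Y)) {x y : Y} (hxy : x ≠ y)
    (hadj : ¬B.Adj (.inr x) (.inr y)) : psi H B ≤ psi H (compress B (.inr x) (.inr y)) := by
  set B' := compress B (.inr x) (.inr y)
  have hne : (Sum.inr x : V ⊕ Y) ≠ .inr y := Sum.inr_injective.ne hxy
  set pairs : SimpleGraph (V ⊕ Y) → Y → ℕ := fun G z =>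
    #((powersetCard 2 univ).filter fun p =>
      (∀ i ∈ p, G.Adj (.inr z) (.inl i)) ∧ ∀ i ∈ p, ∀ j ∈ p, i ≠ j → ¬H.Adj i j)
  have hpsi : ∀ G, psi H G = ∑ v : V, (G.degree (.inl v)).choose 2 + ∑ z, pairs G z :=
    fun _ => rfl
  have hdeg : ∀ v : V, B'.degree (.inl v) = B.degree (.inl v) := fun v =>
    degree_compress_of_ne B hne hadj Sum.inl_ne_inr Sum.inl_ne_inr
  have hsum := sum_add_eq_sum_add_of_eq_off_pair (f := pairs B) (g := pairs B') hxy
    fun z hzx hzy => congrArg card <| filter_congr fun p _ => by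
      simp only [B', compress_adj_of_ne B (Sum.inr_injective.ne hzx) (Sum.inr_injective.ne hzy)
        Sum.inl_ne_inr Sum.inl_ne_inr]
  have hpair : pairs B x + pairs B y ≤ pairs B' x + pairs B' y :=
    card_filter_add_card_filter_le
      (fun p _ => by simp only [B', compress_adj_left B hne, forall_and]; tauto)
      (fun p _ h => by simp only [B', compress_adj_right B hadj]; aesop)
  rw [hpsi, hpsi]
  simp only [hdeg]
  omega

theorem psi_le_compress_and_degSq_lt_compress_general {V Y : Type}
    [Fintype V] [Fintype Y] [DecidableEq V]
    (H : SimpleGraph V) (B : SimpleGraph (V ⊕ Y))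
    (hbipR : ∀ a b : Y, ¬B.Adj (Sum.inr a) (Sum.inr b))
    (x y : Y)
    (hxy : ¬B.neighborSet (Sum.inr x) ⊆ B.neighborSet (Sum.inr y))
    (hyx : ¬B.neighborSet (Sum.inr y) ⊆ B.neighborSet (Sum.inr x)) :
    psi H B ≤ psi H (compress B (Sum.inr x) (Sum.inr y)) ∧
      degSq B < degSq (compress B (Sum.inr x) (Sum.inr y)) := by
  have hne : x ≠ y := by
    rintro rfl
    exact hxy subset_rfl
  exact ⟨psi_le_psi_compress H B hne (hbipR x y), degSq_lt_degSq_compress B (hbipR x y) hxy hyx⟩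

/-- If `B` is bipartite with bipartition `(V(H), Y)` and `x, y ∈ Y` are (non-adjacent) vertices
with incomparable neighborhoods, then `ψ_H(B) ≤ ψ_H(B_{x→y})` and `d₂(B) < d₂(B_{x→y})`. -/
theorem psi_le_compress_and_degSq_lt_compress {V Y : Type}
    [Fintype V] [Fintype Y] [DecidableEq V] [DecidableEq Y]
    (H : SimpleGraph V) (B : SimpleGraph (V ⊕ Y))
    (hbipL : ∀ a b : V, ¬B.Adj (Sum.inl a) (Sum.inl b))
    (hbipR : ∀ a b : Y, ¬B.Adj (Sum.inr a) (Sum.inr b))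
    (x y : Y)
    (hxy : ¬B.neighborSet (Sum.inr x) ⊆ B.neighborSet (Sum.inr y))
    (hyx : ¬B.neighborSet (Sum.inr y) ⊆ B.neighborSet (Sum.inr x)) :
    psi H B ≤ psi H (compress B (Sum.inr x) (Sum.inr y)) ∧
      degSq B < degSq (compress B (Sum.inr x) (Sum.inr y)) :=
  psi_le_compress_and_degSq_lt_compress_general H B hbipR x y hxy hyx
end

section
/- Let X and Y be fixed finite disjoint vertex sets, and let 𝓑 be a family of bipartite graphs with bipartition (X, Y) such that, for any B' ∈ 𝓑 and any x, y ∈ Y with N_{B'}(x) ⊄ N_{B'}(y) and N_{B'}(y) ⊄ N_{B'}(x), the compression B'_{x→y} also belongs to 𝓑. If B ∈ 𝓑 satisfies d_2(B) = max{d_2(B') : B' ∈ 𝓑}, then B is a bipartite threshold graph, i.e., the neighborhoods of the vertices of Y in B are linearly ordered by inclusion. -/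
/-!
Compressing `x → y` for non-adjacent vertices with incomparable neighbourhoods leaves every other
degree unchanged and replaces the pair `d(x), d(y)` by `|N(x) ∩ N(y)| < d(x)` and
`|N(x) ∪ N(y)| > d(x)`, which has the same sum. Spreading two numbers apart at a fixed sum
increases the sum of their squares, so `d₂` strictly grows; a maximiser of `d₂` therefore has
no incomparable pair in `Y`.
-/

open scoped Classical
open Finset

lemma sq_add_sq_lt_sq_add_sq_s7 {a b s t : ℕ} (hsum : s + t = a + b) (hs : s < a) (ht : a < t) :
    a ^ 2 + b ^ 2 < s ^ 2 + t ^ 2 := by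
  nlinarith

lemma Fintype.sum_lt_sum_of_eq_off_pair {W M : Type*} [Fintype W] [AddCommMonoid M]
    [PartialOrder M] [IsOrderedCancelAddMonoid M] {f g : W → M} {x y : W} (hxy : x ≠ y)
    (heq : ∀ v, v ≠ x → v ≠ y → f v = g v)
    (hlt : f x + f y < g x + g y) : ∑ v, f v < ∑ v, g v := by
  have hsplit (h : W → M) : ∑ v, h v = ∑ v ∈ univ \ {x, y}, h v + (h x + h y) := by
    rw [← sum_sdiff (subset_univ {x, y}), sum_pair hxy]
  have hrest : ∑ v ∈ univ \ {x, y}, f v = ∑ v ∈ univ \ {x, y}, g v :=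
    Finset.sum_congr rfl fun v hv => by simp only [mem_sdiff, mem_insert, mem_singleton] at hv; grind
  rw [hsplit f, hsplit g, hrest]
  exact add_lt_add_right hlt _

namespace SimpleGraph

variable {W : Type} (G : SimpleGraph W) {x y v : W}

lemma compress_adj_left (hxy : x ≠ y) (u : W) :
    (compress G x y).Adj x u ↔ G.Adj x u ∧ G.Adj y u := by
  simp only [compress]
  grind [G.ne_of_adj, G.irrefl]

lemma compress_adj_right (hxy : x ≠ y) (hadj : ¬G.Adj x y) (u : W) :
    (compress G x y).Adj y u ↔ G.Adj x u ∨ G.Adj y u := by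
  simp only [compress]
  grind [G.ne_of_adj, G.irrefl, G.symm]

lemma compress_adj_of_moved (hvx : G.Adj x v) (hvy : ¬G.Adj y v) (hv : v ≠ y) (u : W) :
    (compress G x y).Adj v u ↔ u = y ∨ G.Adj v u ∧ u ≠ x := by
  simp only [compress]
  grind [G.ne_of_adj, G.irrefl, G.symm]

lemma compress_adj_of_not_moved (hv : ¬(G.Adj x v ∧ ¬G.Adj y v)) (hvx : v ≠ x) (hvy : v ≠ y)
    (u : W) : (compress G x y).Adj v u ↔ G.Adj v u := by
  simp only [compress]
  grind [G.ne_of_adj, G.irrefl, G.symm]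

variable [Fintype W]

lemma degree_compress_left (hxy : x ≠ y) :
    (compress G x y).degree x = #(G.neighborFinset x ∩ G.neighborFinset y) := by
  rw [← card_neighborFinset_eq_degree]
  congr 1
  ext u
  simp only [mem_neighborFinset, mem_inter, compress_adj_left G hxy]

lemma degree_compress_right (hxy : x ≠ y) (hadj : ¬G.Adj x y) :
    (compress G x y).degree y = #(G.neighborFinset x ∪ G.neighborFinset y) := by
  rw [← card_neighborFinset_eq_degree]
  congr 1
  ext u
  simp only [mem_neighborFinset, mem_union, compress_adj_right G hxy hadj]

lemma degree_compress_of_ne (hvx : v ≠ x) (hvy : v ≠ y) :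
    (compress G x y).degree v = G.degree v := by
  simp only [← card_neighborFinset_eq_degree]
  by_cases hv : G.Adj x v ∧ ¬G.Adj y v
  · have hnf : (compress G x y).neighborFinset v = insert y ((G.neighborFinset v).erase x) := by
      ext u
      simp only [mem_neighborFinset, mem_insert, mem_erase, compress_adj_of_moved G hv.1 hv.2 hvy]
      tauto
    have hy : y ∉ (G.neighborFinset v).erase x := by simpa using fun _ h => hv.2 h.symm
    have hx : x ∈ G.neighborFinset v := by simpa using hv.1.symm
    rw [hnf, card_insert_of_notMem hy, card_erase_add_one hx]
  · congr 1
    ext u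
    simp only [mem_neighborFinset, compress_adj_of_not_moved G hv hvx hvy]

theorem degSq_lt_degSq_compress (hadj : ¬G.Adj x y)
    (hxy : ¬G.neighborSet x ⊆ G.neighborSet y) (hyx : ¬G.neighborSet y ⊆ G.neighborSet x) :
    degSq G < degSq (compress G x y) := by
  have hne : x ≠ y := by rintro rfl; exact hxy subset_rfl
  simp only [← coe_neighborFinset, coe_subset] at hxy hyx
  have hinter : #(G.neighborFinset x ∩ G.neighborFinset y) < G.degree x :=
    card_lt_card ⟨inter_subset_left, fun h => hxy (h.trans inter_subset_right)⟩
  have hunion : G.degree x < #(G.neighborFinset x ∪ G.neighborFinset y) :=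
    card_lt_card ⟨subset_union_left, fun h => hyx (subset_union_right.trans h)⟩
  refine Fintype.sum_lt_sum_of_eq_off_pair hne
    (fun v hvx hvy => by rw [degree_compress_of_ne G hvx hvy]) ?_
  rw [degree_compress_left G hne, degree_compress_right G hne hadj]
  exact sq_add_sq_lt_sq_add_sq_s7 (card_inter_add_card_union _ _) hinter hunion

end SimpleGraph

theorem max_degSq_is_threshold_general {X Y : Type}
    [Fintype X] [Fintype Y]
    (𝓑 : Set (SimpleGraph (X ⊕ Y)))
    (hbip : ∀ B' ∈ 𝓑, (∀ a b : X, ¬B'.Adj (Sum.inl a) (Sum.inl b)) ∧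
      (∀ a b : Y, ¬B'.Adj (Sum.inr a) (Sum.inr b)))
    (hclosed : ∀ B' ∈ 𝓑, ∀ x y : Y,
      ¬B'.neighborSet (Sum.inr x) ⊆ B'.neighborSet (Sum.inr y) →
      ¬B'.neighborSet (Sum.inr y) ⊆ B'.neighborSet (Sum.inr x) →
      compress B' (Sum.inr x) (Sum.inr y) ∈ 𝓑)
    (B : SimpleGraph (X ⊕ Y)) (hB : B ∈ 𝓑)
    (hmax : ∀ B' ∈ 𝓑, degSq B' ≤ degSq B) :
    ∀ x y : Y, B.neighborSet (Sum.inr x) ⊆ B.neighborSet (Sum.inr y) ∨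
      B.neighborSet (Sum.inr y) ⊆ B.neighborSet (Sum.inr x) := by
  intro x y
  by_contra! ⟨hxy, hyx⟩
  exact (hmax _ (hclosed B hB x y hxy hyx)).not_gt
    (B.degSq_lt_degSq_compress ((hbip B hB).2 x y) hxy hyx)

/-- Let `𝓑` be a family of bipartite graphs with bipartition `(X, Y)` closed under compressions
`B'_{x→y}` for `x, y ∈ Y` with incomparable neighborhoods.  If `B ∈ 𝓑` maximizes `d₂` over `𝓑`,
then `B` is a bipartite threshold graph: the neighborhoods of the vertices of `Y` are linearly
ordered by inclusion. -/
theorem max_degSq_is_threshold {X Y : Type}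
    [Fintype X] [Fintype Y] [DecidableEq X] [DecidableEq Y]
    (𝓑 : Set (SimpleGraph (X ⊕ Y)))
    (hbip : ∀ B' ∈ 𝓑, (∀ a b : X, ¬B'.Adj (Sum.inl a) (Sum.inl b)) ∧
      (∀ a b : Y, ¬B'.Adj (Sum.inr a) (Sum.inr b)))
    (hclosed : ∀ B' ∈ 𝓑, ∀ x y : Y,
      ¬B'.neighborSet (Sum.inr x) ⊆ B'.neighborSet (Sum.inr y) →
      ¬B'.neighborSet (Sum.inr y) ⊆ B'.neighborSet (Sum.inr x) →
      compress B' (Sum.inr x) (Sum.inr y) ∈ 𝓑)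
    (B : SimpleGraph (X ⊕ Y)) (hB : B ∈ 𝓑)
    (hmax : ∀ B' ∈ 𝓑, degSq B' ≤ degSq B) :
    ∀ x y : Y, B.neighborSet (Sum.inr x) ⊆ B.neighborSet (Sum.inr y) ∨
      B.neighborSet (Sum.inr y) ⊆ B.neighborSet (Sum.inr x) :=
  max_degSq_is_threshold_general 𝓑 hbip hclosed B hB hmax
end

section
/- Let G be a finite simple graph with maximum degree at most r and let T be a cluster of G with common neighborhood S_T of size s and red graph R = R_T. Then the number of blue triangles at T — triangles of G containing two blue edges — is at most Σ_{v ∈ S_T} C(d_R(v), 2) + (1/2)·Σ_{v ∈ S_T} d_R(v)·(s − 1 − d_R(v)). -/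
/-!
A blue edge has exactly one endpoint in `S_T`, so a blue triangle meets `S_T` either in its apex
alone or in the two ends of its base. A vertex `v ∈ S_T` is adjacent to all of `T`, to
`s - 1 - d_R(v)` vertices of `S_T` and to its blue neighbours, and these sets are disjoint; as
`|T| + s - 1 = r`, the blue degree of `v` is at most `d_R(v)`. A triangle of the first kind is
its apex `v ∈ S_T` together with a pair of blue neighbours of `v`; one of the second kind, seen
from either of its two vertices `v ∈ S_T`, is `v`, a blue neighbour of `v` and a neighbour of
`v` in `S_T`.
-/

open scoped Classical
open Finset

variable {V : Type} [Fintype V] [DecidableEq V]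

theorem Finset.card_mul_eq_sum_card_filter_mem {α : Type*} [DecidableEq α]
    {F : Finset (Finset α)} {S : Finset α} {k : ℕ} (h : ∀ σ ∈ F, #(σ ∩ S) = k) :
    #F * k = ∑ v ∈ S, #{σ ∈ F | v ∈ σ} := by
  have hk : ∀ σ ∈ F, #(S.bipartiteAbove (fun σ v => v ∈ σ) σ) = k := fun σ hσ => by
    rw [← h σ hσ, bipartiteAbove, filter_mem_eq_inter, inter_comm]
  rw [card_eq_sum_ones, sum_mul, one_mul, ← sum_congr rfl hk,
    sum_card_bipartiteAbove_eq_sum_card_bipartiteBelow]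
  rfl

section

variable {G : SimpleGraph V} {T : Finset V} {u v : V}

lemma mem_commonNbrs : u ∈ commonNbrs G T ↔ ∀ v ∈ T, G.Adj v u := by
  simp [commonNbrs]

lemma disjoint_commonNbrs : Disjoint T (commonNbrs G T) :=
  disjoint_left.2 fun _ hT hS => G.irrefl (mem_commonNbrs.1 hS _ hT)

lemma IsBlueEdge.symm (h : IsBlueEdge G T u v) : IsBlueEdge G T v u :=
  ⟨h.1.symm, h.2.symm⟩

lemma IsBlueEdge.mem_commonNbrs_iff (h : IsBlueEdge G T u v) :
    u ∈ commonNbrs G T ↔ v ∉ commonNbrs G T := by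
  rcases h.2 with ⟨hu, hv⟩ | ⟨hv, hu⟩ <;> simp_all

lemma IsBlueEdge.notMem_of_mem_commonNbrs (h : IsBlueEdge G T u v)
    (hu : u ∈ commonNbrs G T) : v ∉ T := by
  rcases h.2 with ⟨-, hv⟩ | ⟨hv, -⟩
  · exact fun hT => hv (mem_union_left _ hT)
  · exact absurd hv (h.mem_commonNbrs_iff.1 hu)

end

lemma card_neighborFinset_inter_add_degree_redGraph (G : SimpleGraph V) {S : Finset V} {v : V}
    (hv : v ∈ S) : #(G.neighborFinset v ∩ S) + (redGraph G S).degree v + 1 = #S := by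
  have hN : G.neighborFinset v ∩ S = {u ∈ S.erase v | G.Adj v u} := by
    ext u
    simp only [mem_inter, SimpleGraph.mem_neighborFinset, mem_filter, mem_erase]
    exact ⟨fun ⟨hvu, hu⟩ => ⟨⟨hvu.ne.symm, hu⟩, hvu⟩, fun ⟨⟨_, hu⟩, hvu⟩ => ⟨hvu, hu⟩⟩
  have hR : (redGraph G S).neighborFinset v = {u ∈ S.erase v | ¬G.Adj v u} := by
    ext u
    rw [SimpleGraph.mem_neighborFinset]
    simp only [redGraph, mem_filter, mem_erase]
    exact ⟨fun ⟨_, hu, hvu, hn⟩ => ⟨⟨hvu.symm, hu⟩, hn⟩,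
      fun ⟨⟨hvu, hu⟩, hn⟩ => ⟨hv, hu, hvu.symm, hn⟩⟩
  rw [← SimpleGraph.card_neighborFinset_eq_degree, hN, hR, card_filter_add_card_filter_not,
    card_erase_add_one hv]

lemma degree_blueGraph_le_degree_redGraph {G : SimpleGraph V} {r : ℕ} (hΔ : G.maxDegree ≤ r)
    {T : Finset V} (hTS : #T + #(commonNbrs G T) = r + 1) {v : V} (hv : v ∈ commonNbrs G T) :
    (blueGraph G T).degree v ≤ (redGraph G (commonNbrs G T)).degree v := by
  have hred := card_neighborFinset_inter_add_degree_redGraph G hv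
  set S := commonNbrs G T
  set N := G.neighborFinset v
  have hblue : (blueGraph G T).neighborFinset v ⊆ N \ (T ∪ S) := fun u hu => by
    have hvu : IsBlueEdge G T v u := (SimpleGraph.mem_neighborFinset _ _ _).1 hu
    simp only [mem_sdiff, mem_union, not_or, N, SimpleGraph.mem_neighborFinset]
    exact ⟨hvu.1, hvu.notMem_of_mem_commonNbrs hv, hvu.mem_commonNbrs_iff.1 hv⟩
  have hnbr : T ∪ (N ∩ S) ⊆ N ∩ (T ∪ S) := fun u hu => by
    rcases mem_union.1 hu with hu | hu
    · exact mem_inter.2 ⟨(G.mem_neighborFinset _ _).2 (mem_commonNbrs.1 hv u hu).symm,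
        mem_union_left _ hu⟩
    · exact mem_inter.2 ⟨(mem_inter.1 hu).1, mem_union_right _ (mem_inter.1 hu).2⟩
  have hTN : #T + #(N ∩ S) ≤ #(N ∩ (T ∪ S)) := by
    rw [← card_union_of_disjoint (disjoint_commonNbrs.mono_right inter_subset_right)]
    exact card_le_card hnbr
  have hN : #N ≤ r := (G.card_neighborFinset_eq_degree v).trans_le
    ((G.degree_le_maxDegree v).trans hΔ)
  have hblue_card := card_le_card hblue
  have hN_split := card_sdiff_add_card_inter N (T ∪ S)
  rw [← SimpleGraph.card_neighborFinset_eq_degree]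
  omega

noncomputable def blueTriangles (G : SimpleGraph V) (T : Finset V) : Finset (Finset V) :=
  (G.cliqueFinset 3).filter (fun σ => ∃ a ∈ σ, ∃ b ∈ σ, ∃ c ∈ σ, b ≠ c ∧
    IsBlueEdge G T a b ∧ IsBlueEdge G T a c)

section

variable {G : SimpleGraph V} {T : Finset V} {σ : Finset V}

lemma exists_eq_of_mem_blueTriangles (hσ : σ ∈ blueTriangles G T) :
    ∃ a b c, G.Adj b c ∧ IsBlueEdge G T a b ∧ IsBlueEdge G T a c ∧ σ = {a, b, c} := by
  obtain ⟨hcl, a, ha, b, hb, c, hc, hbc, hab, hac⟩ := mem_filter.1 hσ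
  rw [SimpleGraph.mem_cliqueFinset_iff] at hcl
  refine ⟨a, b, c, hcl.1 hb hc hbc, hab, hac, (eq_of_subset_of_card_le ?_ ?_).symm⟩
  · simp [insert_subset_iff, ha, hb, hc]
  · rw [hcl.card_eq, card_eq_three.2 ⟨a, b, c, hab.1.ne, hac.1.ne, hbc, rfl⟩]

lemma exists_insert_eq_of_mem_blueTriangles (hσ : σ ∈ blueTriangles G T)
    (h2 : #(σ ∩ commonNbrs G T) ≠ 2) :
    ∃ a ∈ commonNbrs G T, ∃ e ∈ ((blueGraph G T).neighborFinset a).powersetCard 2,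
      σ = insert a e := by
  obtain ⟨a, b, c, hbc, hab, hac, rfl⟩ := exists_eq_of_mem_blueTriangles hσ
  by_cases ha : a ∈ commonNbrs G T
  · refine ⟨a, ha, {b, c}, mem_powersetCard.2 ⟨?_, card_pair hbc.ne⟩, rfl⟩
    simp only [insert_subset_iff, singleton_subset_iff, SimpleGraph.mem_neighborFinset]
    exact ⟨hab, hac⟩
  · have hb := not_not.1 (mt hab.mem_commonNbrs_iff.2 ha)
    have hc := not_not.1 (mt hac.mem_commonNbrs_iff.2 ha)
    refine absurd ?_ h2
    rw [insert_inter_of_notMem ha, insert_inter_of_mem hb, singleton_inter_of_mem hc,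
      card_pair hbc.ne]

lemma exists_mem_product_eq_of_mem_blueTriangles (hσ : σ ∈ blueTriangles G T)
    (h2 : #(σ ∩ commonNbrs G T) = 2) {v : V} (hv : v ∈ σ ∩ commonNbrs G T) :
    ∃ p ∈ (blueGraph G T).neighborFinset v ×ˢ (G.neighborFinset v ∩ commonNbrs G T),
      σ = {v, p.1, p.2} := by
  obtain ⟨a, b, c, hbc, hab, hac, rfl⟩ := exists_eq_of_mem_blueTriangles hσ
  have ha : a ∉ commonNbrs G T := fun ha => by
    rw [insert_inter_of_mem ha, insert_inter_of_notMem (hab.mem_commonNbrs_iff.1 ha),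
      singleton_inter_of_notMem (hac.mem_commonNbrs_iff.1 ha), insert_empty, card_singleton] at h2
    omega
  have hb := not_not.1 (mt hab.mem_commonNbrs_iff.2 ha)
  have hc := not_not.1 (mt hac.mem_commonNbrs_iff.2 ha)
  obtain ⟨hv, hvS⟩ := mem_inter.1 hv
  simp only [mem_insert, mem_singleton] at hv
  rcases hv with rfl | rfl | rfl
  · exact absurd hvS ha
  · refine ⟨(a, c), mem_product.2 ⟨?_, mem_inter.2 ⟨?_, hc⟩⟩, insert_comm _ _ _⟩
    · exact (SimpleGraph.mem_neighborFinset _ _ _).2 hab.symm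
    · exact (G.mem_neighborFinset _ _).2 hbc
  · refine ⟨(a, b), mem_product.2 ⟨?_, mem_inter.2 ⟨?_, hb⟩⟩, ?_⟩
    · exact (SimpleGraph.mem_neighborFinset _ _ _).2 hac.symm
    · exact (G.mem_neighborFinset _ _).2 hbc.symm
    · ext; simp only [mem_insert, mem_singleton]; tauto

lemma card_filter_blueTriangles_ne_two_le :
    #{σ ∈ blueTriangles G T | #(σ ∩ commonNbrs G T) ≠ 2} ≤
      ∑ a ∈ commonNbrs G T, ((blueGraph G T).degree a).choose 2 :=
  calc _ ≤ #((commonNbrs G T).biUnion fun a =>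
          (((blueGraph G T).neighborFinset a).powersetCard 2).image (insert a)) :=
        card_le_card fun σ hσ => by
          obtain ⟨hσ, h2⟩ := mem_filter.1 hσ
          obtain ⟨a, ha, e, he, rfl⟩ := exists_insert_eq_of_mem_blueTriangles hσ h2
          exact mem_biUnion.2 ⟨a, ha, mem_image_of_mem _ he⟩
    _ ≤ _ := card_biUnion_le
    _ ≤ _ := sum_le_sum fun a _ => card_image_le.trans <| by
          rw [card_powersetCard, SimpleGraph.card_neighborFinset_eq_degree]

lemma two_mul_card_filter_blueTriangles_eq_two_le :
    2 * #{σ ∈ blueTriangles G T | #(σ ∩ commonNbrs G T) = 2} ≤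
      ∑ v ∈ commonNbrs G T,
        (blueGraph G T).degree v * #(G.neighborFinset v ∩ commonNbrs G T) := by
  rw [mul_comm, card_mul_eq_sum_card_filter_mem fun σ hσ => (mem_filter.1 hσ).2]
  refine sum_le_sum fun v hv => ?_
  calc _ ≤ #(((blueGraph G T).neighborFinset v ×ˢ (G.neighborFinset v ∩ commonNbrs G T)).image
          fun p => ({v, p.1, p.2} : Finset V)) :=
        card_le_card fun σ hσ => by
          obtain ⟨hσ, hvσ⟩ := mem_filter.1 hσ
          obtain ⟨hσ, h2⟩ := mem_filter.1 hσ
          obtain ⟨p, hp, rfl⟩ :=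
            exists_mem_product_eq_of_mem_blueTriangles hσ h2 (mem_inter.2 ⟨hvσ, hv⟩)
          exact mem_image_of_mem _ hp
    _ ≤ _ := card_image_le.trans <| by
          rw [card_product, SimpleGraph.card_neighborFinset_eq_degree]

end

theorem blue_triangles_le_general {V : Type} [Fintype V] [DecidableEq V]
    (G : SimpleGraph V) (r : ℕ) (hΔ : G.maxDegree ≤ r)
    (T : Finset V)
    (hTS : T.card + (commonNbrs G T).card = r + 1) :
    2 * ((G.cliqueFinset 3).filter (fun σ => ∃ a ∈ σ, ∃ b ∈ σ, ∃ c ∈ σ, b ≠ c ∧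
        IsBlueEdge G T a b ∧ IsBlueEdge G T a c)).card ≤
      2 * (∑ v ∈ commonNbrs G T, ((redGraph G (commonNbrs G T)).degree v).choose 2) +
        ∑ v ∈ commonNbrs G T, (redGraph G (commonNbrs G T)).degree v *
          ((commonNbrs G T).card - 1 - (redGraph G (commonNbrs G T)).degree v) := by
  change 2 * #(blueTriangles G T) ≤ _
  set S := commonNbrs G T
  have hblue_le_red : ∀ v ∈ S, (blueGraph G T).degree v ≤ (redGraph G S).degree v :=
    fun v hv => degree_blueGraph_le_degree_redGraph hΔ hTS hv
  have hcard_nbr : ∀ v ∈ S, #(G.neighborFinset v ∩ S) = #S - 1 - (redGraph G S).degree v :=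
    fun v hv => by have := card_neighborFinset_inter_add_degree_redGraph G hv; omega
  rw [← card_filter_add_card_filter_not fun σ => #(σ ∩ S) = 2, mul_add, add_comm]
  gcongr
  · exact card_filter_blueTriangles_ne_two_le.trans
      (sum_le_sum fun v hv => Nat.choose_le_choose 2 (hblue_le_red v hv))
  · refine two_mul_card_filter_blueTriangles_eq_two_le.trans (sum_le_sum fun v hv => ?_)
    rw [← hcard_nbr v hv]
    exact Nat.mul_le_mul_right _ (hblue_le_red v hv)

/-- The number of blue triangles at a cluster `T` — triangles of `G` containing two blue
edges — is at most `Σ_{v ∈ S_T} C(d_R(v), 2) + (1/2)·Σ_{v ∈ S_T} d_R(v)·(s − 1 − d_R(v))`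
(stated multiplied through by 2). -/
theorem blue_triangles_le {V : Type} [Fintype V] [DecidableEq V]
    (G : SimpleGraph V) (r : ℕ) (hΔ : G.maxDegree ≤ r)
    (T : Finset V) (hT : IsCluster G r T)
    (hTS : T.card + (commonNbrs G T).card = r + 1) :
    2 * ((G.cliqueFinset 3).filter (fun σ => ∃ a ∈ σ, ∃ b ∈ σ, ∃ c ∈ σ, b ≠ c ∧
        IsBlueEdge G T a b ∧ IsBlueEdge G T a c)).card ≤
      2 * (∑ v ∈ commonNbrs G T, ((redGraph G (commonNbrs G T)).degree v).choose 2) +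
        ∑ v ∈ commonNbrs G T, (redGraph G (commonNbrs G T)).degree v *
          ((commonNbrs G T).card - 1 - (redGraph G (commonNbrs G T)).degree v) :=
  blue_triangles_le_general G r hΔ T hTS
end

section
/- Let r ≥ 1 and let R be a finite simple graph on s vertices with s ≤ (r + 2)/2. Then Q(R) = (r + 1 − s)·e(R) + k_3(R) − Σ_{v ∈ R} C(d_R(v), 2) ≥ 0, with equality if and only if R has no edges. -/
open scoped Classical
open Finset

/-- `Q(R) = (r + 1 − s)·e(R) + k₃(R) − Σ_{v ∈ R} C(d_R(v), 2)` for a graph `R` on `s`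
vertices, as an integer. -/
noncomputable def Qval (r : ℕ) {V : Type} [Fintype V] [DecidableEq V]
    (R : SimpleGraph V) : ℤ :=
  ((r : ℤ) + 1 - (Fintype.card V : ℤ)) * (R.edgeFinset.card : ℤ) +
    ((R.cliqueFinset 3).card : ℤ) - ∑ v, (((R.degree v).choose 2 : ℕ) : ℤ)

/-! Since `d_R(v) ≤ s - 1`, each `2·C(d, 2) = d(d - 1)` is at most `(s - 2)·d`, and summing over
the vertices gives `Σ_v C(d_R(v), 2) ≤ (s - 2)·e(R)`. Hence `Q(R) ≥ (r + 3 - 2s)·e(R) + k₃(R) ≥ e(R)`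
when `2s ≤ r + 2`, so `Q(R) = 0` forces `e(R) = 0`. -/

lemma two_mul_natCast_choose_two (n : ℕ) : 2 * (n.choose 2 : ℤ) = n * (n - 1) := by
  have hℚ : ((2 * n.choose 2 : ℤ) : ℚ) = ((n * (n - 1) : ℤ) : ℚ) := by
    push_cast
    rw [Nat.cast_choose_two]
    ring
  exact_mod_cast hℚ

namespace SimpleGraph

variable {V : Type} [Fintype V] (G : SimpleGraph V) [DecidableRel G.Adj]

-- Over `ℤ` rather than `ℕ`, so that `s - 2` does not truncate when `s ≤ 1`.
lemma two_mul_degree_choose_two_le (v : V) :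
    2 * ((G.degree v).choose 2 : ℤ) ≤ ((Fintype.card V : ℤ) - 2) * G.degree v := by
  have hd : (G.degree v : ℤ) + 1 ≤ Fintype.card V := by exact_mod_cast G.degree_lt_card_verts v
  rw [two_mul_natCast_choose_two]
  nlinarith [Int.natCast_nonneg (G.degree v)]

lemma two_mul_sum_degree_choose_two_le :
    2 * ∑ v, ((G.degree v).choose 2 : ℤ) ≤ ((Fintype.card V : ℤ) - 2) * (2 * #G.edgeFinset) := by
  have hsum : ∑ v, (G.degree v : ℤ) = 2 * #G.edgeFinset := by
    exact_mod_cast G.sum_degrees_eq_twice_card_edges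
  rw [Finset.mul_sum, ← hsum, Finset.mul_sum]
  exact Finset.sum_le_sum fun v _ => G.two_mul_degree_choose_two_le v

end SimpleGraph

section Qval

variable {V : Type} [Fintype V] [DecidableEq V]

lemma card_edgeFinset_le_Qval {r : ℕ} (R : SimpleGraph V) (hs : 2 * Fintype.card V ≤ r + 2) :
    (#R.edgeFinset : ℤ) ≤ Qval r R := by
  have hsum := R.two_mul_sum_degree_choose_two_le
  have hs' : 2 * (Fintype.card V : ℤ) ≤ r + 2 := by exact_mod_cast hs
  have hk₃ : (0 : ℤ) ≤ #(R.cliqueFinset 3) := Int.natCast_nonneg _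
  unfold Qval
  linarith [mul_nonneg (sub_nonneg.2 hs') (Int.natCast_nonneg #R.edgeFinset)]

lemma Qval_eq_zero_of_eq_bot (r : ℕ) {R : SimpleGraph V} (hR : R = ⊥) : Qval r R = 0 := by
  have he : R.edgeFinset = ∅ := SimpleGraph.edgeFinset_eq_empty.mpr hR
  have hk₃ : R.cliqueFinset 3 = ∅ :=
    SimpleGraph.cliqueFinset_eq_empty_iff.mpr (hR ▸ SimpleGraph.cliqueFree_bot (by norm_num))
  have hdeg (v : V) : R.degree v = 0 :=
    (R.degree_eq_zero_iff_notMem_support v).mpr (by simp [hR])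
  simp [Qval, he, hk₃, hdeg]

end Qval

theorem Qval_nonneg_of_small_general {V : Type} [Fintype V] [DecidableEq V]
    (r : ℕ) (R : SimpleGraph V)
    (hs : 2 * Fintype.card V ≤ r + 2) :
    0 ≤ Qval r R ∧ (Qval r R = 0 ↔ R = ⊥) := by
  have hle := card_edgeFinset_le_Qval R hs
  refine ⟨(Int.natCast_nonneg _).trans hle, fun hQ => ?_, Qval_eq_zero_of_eq_bot r⟩
  have he : #R.edgeFinset = 0 := by omega
  rwa [Finset.card_eq_zero, SimpleGraph.edgeFinset_eq_empty] at he

/-- If `R` is a graph on `s` vertices with `s ≤ (r + 2)/2` (i.e. `2s ≤ r + 2`), then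
`Q(R) ≥ 0`, with equality if and only if `R` has no edges. -/
theorem Qval_nonneg_of_small {V : Type} [Fintype V] [DecidableEq V]
    (r : ℕ) (hr : 1 ≤ r) (R : SimpleGraph V)
    (hs : 2 * Fintype.card V ≤ r + 2) :
    0 ≤ Qval r R ∧ (Qval r R = 0 ↔ R = ⊥) :=
  Qval_nonneg_of_small_general r R hs
end

section
/- Let r ≥ 1, let s and t be positive integers with s + t = r + 1, and let R be a finite simple graph on s vertices with minimum degree at least 1 and maximum degree at most 2. Then Q(R) = (r + 1 − s)·e(R) + k_3(R) − Σ_{v ∈ R} C(d_R(v), 2) ≥ 0, with equality only when t = 1 and R is a disjoint union of cycles of length at least 4. -/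
/- With all degrees in {1, 2} we have C(d, 2) = d - 1, so by the handshake lemma
Σ C(d_v, 2) = 2e - s and Q(R) = (t - 1)·e + k₃ + (s - e). Each of the three terms is
nonnegative (e ≤ s because Δ ≤ 2), and Q = 0 forces t = 1 (as e ≥ s/2 > 0), k₃ = 0 and
e = s, i.e. every degree equals 2. -/

open scoped Classical
open Finset

namespace SimpleGraph

variable {V : Type} [Fintype V] (G : SimpleGraph V) [DecidableRel G.Adj] {k : ℕ}

lemma mul_card_le_two_mul_card_edgeFinset (h : ∀ v, k ≤ G.degree v) :
    k * Fintype.card V ≤ 2 * #G.edgeFinset :=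
  calc k * Fintype.card V = ∑ _v : V, k := by simp [mul_comm]
    _ ≤ ∑ v, G.degree v := sum_le_sum fun v _ => h v
    _ = 2 * #G.edgeFinset := G.sum_degrees_eq_twice_card_edges

lemma two_mul_card_edgeFinset_le_mul_card (h : ∀ v, G.degree v ≤ k) :
    2 * #G.edgeFinset ≤ k * Fintype.card V :=
  calc 2 * #G.edgeFinset = ∑ v, G.degree v := G.sum_degrees_eq_twice_card_edges.symm
    _ ≤ ∑ _v : V, k := sum_le_sum fun v _ => h v
    _ = k * Fintype.card V := by simp [mul_comm]

lemma degree_eq_of_two_mul_card_edgeFinset_eq (h : ∀ v, G.degree v ≤ k)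
    (he : 2 * #G.edgeFinset = k * Fintype.card V) (v : V) : G.degree v = k := by
  by_contra hv
  have hlt : ∑ w, G.degree w < ∑ _w : V, k :=
    sum_lt_sum (fun w _ => h w) ⟨v, mem_univ v, (h v).lt_of_ne hv⟩
  rw [sum_degrees_eq_twice_card_edges, he] at hlt
  simp [mul_comm] at hlt

lemma sum_degree_choose_two_eq (hδ : ∀ v, 1 ≤ G.degree v) (hΔ : ∀ v, G.degree v ≤ 2) :
    ∑ v, ((G.degree v).choose 2 : ℤ) = 2 * #G.edgeFinset - Fintype.card V := by
  have hchoose (v : V) : ((G.degree v).choose 2 : ℤ) = G.degree v - 1 := by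
    obtain h | h : G.degree v = 1 ∨ G.degree v = 2 := by grind
    all_goals simp [h]
  simp only [hchoose, sum_sub_distrib, sum_const, card_univ, nsmul_eq_mul, mul_one, sub_left_inj]
  exact_mod_cast G.sum_degrees_eq_twice_card_edges

end SimpleGraph

open SimpleGraph

lemma Qval_eq_of_one_le_degree_le_two (r : ℕ) {V : Type} [Fintype V] [DecidableEq V]
    (R : SimpleGraph V) (hδ : ∀ v, 1 ≤ R.degree v) (hΔ : ∀ v, R.degree v ≤ 2) :
    Qval r R = ((r : ℤ) - Fintype.card V) * #R.edgeFinset + #(R.cliqueFinset 3) +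
      (Fintype.card V - #R.edgeFinset) := by
  rw [Qval, R.sum_degree_choose_two_eq hδ hΔ]
  ring

theorem Qval_nonneg_of_maxDegree_two_general {V : Type} [Fintype V] [DecidableEq V]
    (r s t : ℕ) (hs : 1 ≤ s) (ht : 1 ≤ t) (hst : s + t = r + 1)
    (hV : Fintype.card V = s)
    (R : SimpleGraph V)
    (hδ : ∀ v : V, 1 ≤ R.degree v) (hΔ : ∀ v : V, R.degree v ≤ 2) :
    0 ≤ Qval r R ∧
      (Qval r R = 0 →
        t = 1 ∧ (∀ v : V, R.degree v = 2) ∧ (R.cliqueFinset 3).card = 0) := by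
  have hlow := R.mul_card_le_two_mul_card_edgeFinset hδ
  have hhigh := R.two_mul_card_edgeFinset_le_mul_card hΔ
  rw [hV] at hlow hhigh
  have hr_sub : (r : ℤ) - s = t - 1 := by omega
  have hterm : 0 ≤ ((t : ℤ) - 1) * #R.edgeFinset := mul_nonneg (by omega) (by positivity)
  rw [Qval_eq_of_one_le_degree_le_two r R hδ hΔ, hV, hr_sub]
  refine ⟨by omega, fun h0 => ?_⟩
  have hterm0 : ((t : ℤ) - 1) * #R.edgeFinset = 0 := by omega
  refine ⟨?_, R.degree_eq_of_two_mul_card_edgeFinset_eq hΔ (by rw [hV]; omega), by omega⟩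
  rcases mul_eq_zero.mp hterm0 with h | h <;> omega

/-- Let `s + t = r + 1` with `s, t ≥ 1`, and let `R` be a graph on `s` vertices with minimum
degree at least `1` and maximum degree at most `2`.  Then `Q(R) ≥ 0`, with equality only when
`t = 1` and `R` is a disjoint union of cycles of length at least `4` (equivalently, `R` is
`2`-regular and triangle-free). -/
theorem Qval_nonneg_of_maxDegree_two {V : Type} [Fintype V] [DecidableEq V]
    (r s t : ℕ) (hr : 1 ≤ r) (hs : 1 ≤ s) (ht : 1 ≤ t) (hst : s + t = r + 1)
    (hV : Fintype.card V = s)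
    (R : SimpleGraph V)
    (hδ : ∀ v : V, 1 ≤ R.degree v) (hΔ : ∀ v : V, R.degree v ≤ 2) :
    0 ≤ Qval r R ∧
      (Qval r R = 0 →
        t = 1 ∧ (∀ v : V, R.degree v = 2) ∧ (R.cliqueFinset 3).card = 0) :=
  Qval_nonneg_of_maxDegree_two_general r s t hs ht hst hV R hδ hΔ
end
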